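/- arXiv:1312.4023 — 3 statements merged into one kernel-verified Lean document; each statement's English description precedes it below -/
import Mathlib

section
/- A right R-module M is principally δ-lifting if and only if every cyclic submodule C of M can be written as C = N ⊕ S, where N is a direct summand of M and S is δ-small in M. -/
/-- A submodule `K` of `M` is *essential* in `M` if it has nonzero intersection with
every nonzero submodule of `M`. -/
def IsEssentialSubmodule {R M : Type*} [Ring R] [AddCommGroup M] [Module R M]
    (K : Submodule R M) : Prop :=
  ∀ N : Submodule R M, N ≠ ⊥ → K ⊓ N ≠ ⊥

/-- A module `M` is *singular* if the annihilator of every element of `M` is an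
essential ideal of `R`. -/
def IsSingularModule (R M : Type*) [Ring R] [AddCommGroup M] [Module R M] : Prop :=
  ∀ x : M, IsEssentialSubmodule (LinearMap.ker (LinearMap.toSpanSingleton R M x))

/-- A submodule `N` of `M` is *δ-small* in `M` if whenever `M = N + X` with `M/X`
singular, we have `X = M`. -/
def IsDeltaSmall (R : Type*) {M : Type*} [Ring R] [AddCommGroup M] [Module R M]
    (N : Submodule R M) : Prop :=
  ∀ X : Submodule R M, N ⊔ X = ⊤ → IsSingularModule R (M ⧸ X) → X = ⊤

/-- A module `M` is *principally δ-lifting* if for each `m ∈ M` there is a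
decomposition `M = A ⊕ B` with `A ≤ mR` and `mR ∩ B` δ-small in `B`. -/
def IsPrinDeltaLifting (R M : Type*) [Ring R] [AddCommGroup M] [Module R M] : Prop :=
  ∀ m : M, ∃ A B : Submodule R M, A ≤ Submodule.span R {m} ∧ IsCompl A B ∧
    IsDeltaSmall R ((Submodule.span R {m} ⊓ B).comap B.subtype)

/-!
δ-smallness is preserved under images by homomorphisms: if `M₂ = f(S) + X` with `M₂/X` singular,
then `M = S + f⁻¹(X)` and `M/f⁻¹(X)` embeds in `M₂/X`, hence is singular too. Both directions are
then a transport of δ-smallness along a map: from `mR ∩ B` in `B` to `M` along the inclusion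
`B ↪ M`, and from `S` in `M` to `N'` along the projection `M → N'` with kernel `N`, whose image
of `S` contains `mR ∩ N'` because `mR = N + S`.
-/

open Submodule

section

variable {R M M₂ : Type*} [Ring R] [AddCommGroup M] [Module R M] [AddCommGroup M₂] [Module R M₂]

theorem IsSingularModule.of_injective (h : IsSingularModule R M₂) {f : M →ₗ[R] M₂}
    (hf : Function.Injective f) : IsSingularModule R M := fun x => by
  have hfx := h (f x)
  rwa [← LinearMap.comp_toSpanSingleton,
    LinearMap.ker_comp_of_ker_eq_bot _ (LinearMap.ker_eq_bot.mpr hf)] at hfx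

theorem IsSingularModule.quotient_comap {X : Submodule R M₂} (h : IsSingularModule R (M₂ ⧸ X))
    (f : M →ₗ[R] M₂) : IsSingularModule R (M ⧸ X.comap f) :=
  h.of_injective (f := (X.comap f).mapQ X f le_rfl) <| LinearMap.ker_eq_bot.mp <| by
    rw [ker_mapQ, mkQ_map_self]

theorem IsDeltaSmall.mono {S T : Submodule R M} (hT : IsDeltaSmall R T) (hST : S ≤ T) :
    IsDeltaSmall R S := fun X hX hsing =>
  hT X (top_unique (hX ▸ sup_le_sup_right hST X)) hsing

theorem IsDeltaSmall.map {S : Submodule R M} (hS : IsDeltaSmall R S) (f : M →ₗ[R] M₂) :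
    IsDeltaSmall R (S.map f) := by
  intro X hX hsing
  have hcover : S ⊔ X.comap f = ⊤ := by
    have : (S ⊔ X.comap f).map f ⊔ X = ⊤ :=
      top_unique (hX ▸ sup_le_sup_right (map_mono le_sup_left) X)
    rw [← comap_map_sup_of_comap_le (f := f) (le_sup_right : X.comap f ≤ S ⊔ X.comap f), this,
      comap_top]
  have hSX : S.map f ≤ X := map_le_iff_le_comap.mpr (hS _ hcover (hsing.quotient_comap f) ▸ le_top)
  rwa [← sup_eq_right.mpr hSX]

theorem comap_subtype_sup_le_map_projectionOnto {N N' : Submodule R M} (h : IsCompl N' N)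
    (S : Submodule R M) : (N ⊔ S).comap N'.subtype ≤ S.map (N'.projectionOnto N h) := by
  intro x hx
  obtain ⟨n, hn, s, hs, hns⟩ := mem_sup.mp hx
  refine ⟨s, hs, ?_⟩
  calc N'.projectionOnto N h s = N'.projectionOnto N h (n + s) := by
        rw [map_add, projectionOnto_apply_of_mem_right h hn, zero_add]
    _ = x := by rw [hns]; exact projectionOnto_apply_left h x

end

theorem isPrinDeltaLifting_iff_cyclic_decomp
    {R M : Type*} [Ring R] [AddCommGroup M] [Module R M] :
    IsPrinDeltaLifting R M ↔
      ∀ m : M, ∃ N S : Submodule R M, N ⊔ S = Submodule.span R {m} ∧ N ⊓ S = ⊥ ∧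
        (∃ N' : Submodule R M, IsCompl N N') ∧ IsDeltaSmall R S := by
  constructor
  · intro h m
    obtain ⟨A, B, hAm, hAB, hδ⟩ := h m
    refine ⟨A, span R {m} ⊓ B, ?_, (hAB.disjoint.mono_right inf_le_right).eq_bot, ⟨B, hAB⟩, ?_⟩
    · rw [inf_comm, ← sup_inf_assoc_of_le _ hAm, hAB.sup_eq_top, top_inf_eq]
    · simpa only [map_comap_subtype, inf_of_le_right inf_le_right] using hδ.map B.subtype
  · intro h m
    obtain ⟨N, S, hNS, -, ⟨N', hNN'⟩, hS⟩ := h m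
    refine ⟨N, N', hNS ▸ le_sup_left, hNN', (hS.map (N'.projectionOnto N hNN'.symm)).mono ?_⟩
    exact (comap_mono (hNS ▸ inf_le_left)).trans
      (comap_subtype_sup_le_map_projectionOnto hNN'.symm S)
end

section
/- Let M be an indecomposable right R-module. Then M is principally δ-lifting if and only if M is principally δ-hollow, i.e., every proper cyclic submodule of M is δ-small in M. -/
/-- A module `M` is *principally δ-hollow* if every proper cyclic submodule of `M`
is δ-small in `M`. -/
def IsPrinDeltaHollow (R M : Type*) [Ring R] [AddCommGroup M] [Module R M] : Prop :=
  ∀ m : M, Submodule.span R {m} ≠ ⊤ → IsDeltaSmall R (Submodule.span R {m})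

section DeltaSmall

variable {R M M' : Type*} [Ring R] [AddCommGroup M] [Module R M] [AddCommGroup M'] [Module R M']

theorem IsSingularModule.of_linearEquiv (e : M ≃ₗ[R] M') (h : IsSingularModule R M) :
    IsSingularModule R M' := by
  intro x
  have hker : LinearMap.ker (LinearMap.toSpanSingleton R M' x)
      = LinearMap.ker (LinearMap.toSpanSingleton R M (e.symm x)) := by
    ext r
    simp only [LinearMap.mem_ker, LinearMap.toSpanSingleton_apply, ← map_smul,
      e.symm.map_eq_zero_iff]
  rw [hker]
  exact h _

theorem IsDeltaSmall.map_linearEquiv (e : M ≃ₗ[R] M') {N : Submodule R M}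
    (h : IsDeltaSmall R N) : IsDeltaSmall R (N.map (e : M →ₗ[R] M')) := by
  intro X hX hsing
  have hmap : (X.comap (e : M →ₗ[R] M')).map (e : M →ₗ[R] M') = X :=
    Submodule.map_comap_eq_of_surjective e.surjective X
  have hsup : N ⊔ X.comap (e : M →ₗ[R] M') = ⊤ := by
    apply Submodule.map_injective_of_injective e.injective
    rw [Submodule.map_sup, hmap, hX, Submodule.map_top, LinearEquiv.range]
  have htop := h _ hsup (hsing.of_linearEquiv (Submodule.Quotient.equiv _ X e hmap).symm)
  rw [← hmap, htop, Submodule.map_top, LinearEquiv.range]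

theorem isDeltaSmall_comap_topSubtype_iff {N : Submodule R M} :
    IsDeltaSmall R (N.comap (⊤ : Submodule R M).subtype) ↔ IsDeltaSmall R N := by
  let e : (⊤ : Submodule R M) ≃ₗ[R] M := Submodule.topEquiv
  change IsDeltaSmall R (N.comap (e : (⊤ : Submodule R M) →ₗ[R] M)) ↔ _
  constructor
  · intro h
    simpa only [Submodule.map_comap_eq_of_surjective e.surjective] using h.map_linearEquiv e
  · intro h
    rw [Submodule.comap_equiv_eq_map_symm]
    exact h.map_linearEquiv e.symm

theorem IsDeltaSmall.of_subsingleton [Subsingleton M] (N : Submodule R M) : IsDeltaSmall R N :=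
  fun X _ _ => Subsingleton.elim X ⊤

end DeltaSmall

section PrincipallyDeltaLifting

variable {R M : Type*} [Ring R] [AddCommGroup M] [Module R M]

theorem IsPrinDeltaHollow.isPrinDeltaLifting (h : IsPrinDeltaHollow R M) :
    IsPrinDeltaLifting R M := by
  intro m
  by_cases hm : Submodule.span R {m} = ⊤
  · exact ⟨⊤, ⊥, hm.ge, isCompl_top_bot, .of_subsingleton _⟩
  · refine ⟨⊥, ⊤, bot_le, isCompl_bot_top, ?_⟩
    rw [inf_top_eq, isDeltaSmall_comap_topSubtype_iff]
    exact h m hm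

theorem IsPrinDeltaLifting.isPrinDeltaHollow
    (hind : ∀ A B : Submodule R M, IsCompl A B → A = ⊥ ∨ A = ⊤) (h : IsPrinDeltaLifting R M) :
    IsPrinDeltaHollow R M := by
  intro m hm
  obtain ⟨A, B, hA, hAB, hsmall⟩ := h m
  rcases hind A B hAB with rfl | rfl
  · rwa [eq_top_of_bot_isCompl hAB, inf_top_eq, isDeltaSmall_comap_topSubtype_iff] at hsmall
  · exact absurd (top_le_iff.mp hA) hm

end PrincipallyDeltaLifting

theorem indecomposable_isPrinDeltaLifting_iff_hollow_general
    {R M : Type*} [Ring R] [AddCommGroup M] [Module R M]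
    (hind : ∀ A B : Submodule R M, IsCompl A B → A = ⊥ ∨ A = ⊤) :
    IsPrinDeltaLifting R M ↔ IsPrinDeltaHollow R M :=
  ⟨IsPrinDeltaLifting.isPrinDeltaHollow hind, IsPrinDeltaHollow.isPrinDeltaLifting⟩

theorem indecomposable_isPrinDeltaLifting_iff_hollow
    {R M : Type*} [Ring R] [AddCommGroup M] [Module R M] [Nontrivial M]
    (hind : ∀ A B : Submodule R M, IsCompl A B → A = ⊥ ∨ A = ⊤) :
    IsPrinDeltaLifting R M ↔ IsPrinDeltaHollow R M :=
  indecomposable_isPrinDeltaLifting_iff_hollow_general hind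
end

section
/- Let M be a nonzero right R-module. Then M is principally δ-hollow if and only if M is a local module or Rad_δ(M) = M. -/
/-- `Rad_δ(M)`: the sum of all δ-small submodules of `M`. -/
def deltaRad (R M : Type*) [Ring R] [AddCommGroup M] [Module R M] : Submodule R M :=
  sSup {N : Submodule R M | IsDeltaSmall R N}

/-- A module is *principally semisimple* if every cyclic submodule is a direct summand. -/
def IsPrinSemisimple (R M : Type*) [Ring R] [AddCommGroup M] [Module R M] : Prop :=
  ∀ m : M, ∃ B : Submodule R M, IsCompl (Submodule.span R {m}) B

/-!
If `M` is principally δ-hollow, every proper submodule is a sum of proper cyclic, hence δ-small,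
submodules, so it lies in `Rad_δ(M)`; thus either `Rad_δ(M) = M` or `Rad_δ(M)` is the largest
proper submodule and `M` is local. Conversely, in a local module `K + X = M` forces `K = M` or
`X = M`, and if `Rad_δ(M) = M` then each cyclic submodule, being compact in the submodule lattice,
lies in a finite sum of δ-small submodules, which is again δ-small.
-/

section

variable {R M : Type*} [Ring R] [AddCommGroup M] [Module R M]

theorem IsEssentialSubmodule.mono {K K' : Submodule R M} (h : K ≤ K')
    (hK : IsEssentialSubmodule K) : IsEssentialSubmodule K' := fun N hN hK'N =>
  hK N hN (le_bot_iff.mp (hK'N ▸ inf_le_inf_right N h))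

theorem isSingularModule_quotient_of_le {X Y : Submodule R M} (h : X ≤ Y)
    (hX : IsSingularModule R (M ⧸ X)) : IsSingularModule R (M ⧸ Y) := by
  intro y
  obtain ⟨m, rfl⟩ := Submodule.Quotient.mk_surjective Y y
  refine (hX (Submodule.Quotient.mk m)).mono fun r hr => ?_
  simp only [LinearMap.mem_ker, LinearMap.toSpanSingleton_apply] at hr ⊢
  rw [← Submodule.Quotient.mk_smul, Submodule.Quotient.mk_eq_zero] at hr ⊢
  exact h hr

theorem IsDeltaSmall.mono_s14 {N N' : Submodule R M} (h : N ≤ N') (hN' : IsDeltaSmall R N') :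
    IsDeltaSmall R N := fun X hX hsing =>
  hN' X (top_le_iff.mp (hX ▸ sup_le_sup_right h X)) hsing

theorem isDeltaSmall_bot : IsDeltaSmall R (⊥ : Submodule R M) := fun X hX _ => by
  simpa using hX

theorem IsDeltaSmall.sup {N₁ N₂ : Submodule R M} (h₁ : IsDeltaSmall R N₁)
    (h₂ : IsDeltaSmall R N₂) : IsDeltaSmall R (N₁ ⊔ N₂) := by
  intro X hX hsing
  have hN₂X : N₂ ⊔ X = ⊤ :=
    h₁ (N₂ ⊔ X) (by rwa [← sup_assoc]) (isSingularModule_quotient_of_le le_sup_right hsing)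
  exact h₂ X hN₂X hsing

theorem IsDeltaSmall.of_fg_of_le_deltaRad {N : Submodule R M} (hfg : N.FG)
    (hN : N ≤ deltaRad R M) : IsDeltaSmall R N := by
  obtain ⟨t, hts, hle⟩ :=
    (CompleteLattice.isCompactElement_iff_exists_le_sSup_of_le_sSup _ N).mp
      ((Submodule.fg_iff_compact N).mp hfg) _ hN
  have hsup : IsDeltaSmall R (t.sup id) :=
    Finset.sup_induction isDeltaSmall_bot (fun _ ha _ hb => ha.sup hb) fun _ hi => hts hi
  exact hsup.mono_s14 hle

theorem isDeltaSmall_of_forall_ne_top_le {N K : Submodule R M} (hN : N ≠ ⊤)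
    (hle : ∀ L : Submodule R M, L ≠ ⊤ → L ≤ N) (hK : K ≠ ⊤) : IsDeltaSmall R K := by
  intro X hKX _
  by_contra hX
  exact hN (top_le_iff.mp (hKX ▸ sup_le (hle K hK) (hle X hX)))

theorem IsPrinDeltaHollow.le_deltaRad (h : IsPrinDeltaHollow R M) {K : Submodule R M}
    (hK : K ≠ ⊤) : K ≤ deltaRad R M := fun x hx =>
  have hx' : Submodule.span R {x} ≠ ⊤ := fun htop =>
    hK (top_le_iff.mp (htop ▸ (Submodule.span_singleton_le_iff_mem x K).mpr hx))
  Submodule.mem_sSup_of_mem (h x hx') (Submodule.mem_span_singleton_self x)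

end

theorem isPrinDeltaHollow_iff_local_or_deltaRad_eq_top_general
    {R M : Type*} [Ring R] [AddCommGroup M] [Module R M] :
    IsPrinDeltaHollow R M ↔
      ((∃ N : Submodule R M, IsCoatom N ∧ ∀ K : Submodule R M, K ≠ ⊤ → K ≤ N) ∨
        deltaRad R M = ⊤) := by
  constructor
  · intro h
    by_cases hrad : deltaRad R M = ⊤
    · exact Or.inr hrad
    · exact Or.inl ⟨deltaRad R M,
        isCoatom_iff_ge_of_le.mpr ⟨hrad, fun _ hK _ => h.le_deltaRad hK⟩,
        fun _ hK => h.le_deltaRad hK⟩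
  · rintro (⟨N, hN, hle⟩ | hrad) m hm
    · exact isDeltaSmall_of_forall_ne_top_le hN.1 hle hm
    · exact .of_fg_of_le_deltaRad (Submodule.fg_span_singleton m) (hrad ▸ le_top)

theorem isPrinDeltaHollow_iff_local_or_deltaRad_eq_top
    {R M : Type*} [Ring R] [AddCommGroup M] [Module R M] [Nontrivial M] :
    IsPrinDeltaHollow R M ↔
      ((∃ N : Submodule R M, IsCoatom N ∧ ∀ K : Submodule R M, K ≠ ⊤ → K ≤ N) ∨
        deltaRad R M = ⊤) :=
  isPrinDeltaHollow_iff_local_or_deltaRad_eq_top_general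
end
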